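/- Let T be a tree (a connected acyclic graph) and let g be an automorphism of T of finite order that fixes no vertex. Then g inverts some edge, i.e., there exist adjacent vertices u, v with g(u) = v and g(v) = u. -/

import Mathlib

/-!
Pick a vertex `v` of minimal displacement `n = d(v, φ v)`, which is positive, and a geodesic `P`
from `v` to `φ v` with second vertex `x` and penultimate vertex `y`. If `φ x = y`, then either
`n = 1` and `φ` inverts the edge `v — φ v`, or `n ≥ 2` and `x` is displaced by at most `n - 2`,
against minimality. If `φ x ≠ y`, the translates `P, φ P, φ² P, …` concatenate without
backtracking, which in a tree gives a path of length `k n` from `v` to `φᵏ v`; hence no positive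
power of `φ` fixes `v`, against finite order.
-/

namespace SimpleGraph

variable {V : Type*} {G : SimpleGraph V}

namespace Walk

lemma snd_append_of_not_nil {u v w : V} {p : G.Walk u v} (hp : ¬p.Nil) (q : G.Walk v w) :
    (p.append q).snd = p.snd := by
  cases p with
  | nil => exact absurd Nil.nil hp
  | cons h p => simp

lemma snd_map {V' : Type*} {G' : SimpleGraph V'} (f : G →g G') {u v : V} (p : G.Walk u v) :
    (p.map f).snd = f p.snd :=
  getVert_map f p 1

lemma not_nil_of_apply_snd_ne_penultimate {f : V → V} {v : V} {p : G.Walk v (f v)}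
    (h : f p.snd ≠ p.penultimate) : ¬p.Nil := by
  intro hp
  have hv : v = f v := hp.eq
  have hlen : p.length = 0 := length_eq_zero_iff.mpr hp
  rw [penultimate, snd, getVert_of_length_le _ (by omega), getVert_of_length_le _ (by omega),
    ← hv, ← hv] at h
  exact h rfl

lemma penultimate_tail {u v : V} {p : G.Walk u v} (hp : p.length ≠ 1) :
    p.tail.penultimate = p.penultimate := by
  simp only [penultimate, getVert_tail, length_tail]
  obtain h | h := Nat.eq_zero_or_pos p.length
  · rw [getVert_of_length_le _ (by omega), getVert_of_length_le _ (by omega)]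
  · congr 1
    omega

lemma dist_snd_penultimate_le {u v : V} (p : G.Walk u v) (hp : p.length ≠ 1) :
    G.dist p.snd p.penultimate ≤ p.length - 2 := by
  have := G.dist_le (p.tail.dropLast.copy rfl (penultimate_tail hp))
  rwa [length_copy, length_dropLast, length_tail, Nat.sub_sub] at this

end Walk

def Iso.toPermHom : (G ≃g G) →* Equiv.Perm V where
  toFun := RelIso.toEquiv
  map_one' := rfl
  map_mul' _ _ := rfl

lemma Iso.toPermHom_injective : Function.Injective (Iso.toPermHom (G := G)) :=
  RelIso.toEquiv_injective

theorem IsAcyclic.isPath_append (hG : G.IsAcyclic) {u v w : V} {p : G.Walk u v}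
    {q : G.Walk v w} (hp : p.IsPath) (hq : q.IsPath) (h : p.penultimate ≠ q.snd) :
    (p.append q).IsPath := by
  classical
  obtain ⟨hvq, hq'⟩ := List.nodup_cons.mp (q.cons_tail_support ▸ hq.support_nodup)
  rw [Walk.isPath_def, Walk.support_append, List.nodup_append]
  refine ⟨hp.support_nodup, hq', ?_⟩
  rintro x hxp _ hxq rfl
  have hxv : x ≠ v := by rintro rfl; exact hvq hxq
  have hxp' : x ∈ p.reverse.support := by simpa using hxp
  have hxq' : x ∈ q.support := List.mem_of_mem_tail hxq
  have hsame : p.reverse.takeUntil x hxp' = q.takeUntil x hxq' :=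
    congrArg Subtype.val <| (hG.subsingleton_path v x).elim
      ⟨_, hp.reverse.takeUntil hxp'⟩ ⟨_, hq.takeUntil hxq'⟩
  apply h
  rw [← p.snd_reverse, ← Walk.snd_takeUntil hxv _ hxp', hsame, Walk.snd_takeUntil hxv]

theorem IsAcyclic.exists_isPath_pow_apply (hG : G.IsAcyclic) (φ : G ≃g G) {v : V}
    {P : G.Walk v (φ v)} (hP : P.IsPath) (h : φ P.snd ≠ P.penultimate) (k : ℕ) :
    ∃ W : G.Walk v ((φ ^ (k + 1)) v),
      W.IsPath ∧ W.length = (k + 1) * P.length ∧ W.snd = P.snd := by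
  induction k with
  | zero => exact ⟨P.copy rfl (by rw [zero_add, pow_one]), by simpa, by simp, by simp [Walk.snd]⟩
  | succ k ih =>
    obtain ⟨W, hWp, hWl, hWs⟩ := ih
    have hend : φ ((φ ^ (k + 1)) v) = (φ ^ (k + 2)) v := by
      rw [pow_succ' φ (k + 1), RelIso.mul_apply]
    refine ⟨P.append ((W.map φ.toHom).copy rfl hend), hG.isPath_append hP ?_ ?_, ?_,
      Walk.snd_append_of_not_nil (Walk.not_nil_of_apply_snd_ne_penultimate h) _⟩
    · simpa using hWp.map φ.injective
    · rw [Walk.snd, Walk.getVert_copy, ← Walk.snd, Walk.snd_map, hWs]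
      exact h.symm
    · simp only [Walk.length_append, Walk.length_copy, Walk.length_map, hWl]
      ring

theorem IsAcyclic.pow_apply_ne_self (hG : G.IsAcyclic) (φ : G ≃g G) {v : V}
    {P : G.Walk v (φ v)} (hP : P.IsPath) (h : φ P.snd ≠ P.penultimate) {k : ℕ} (hk : k ≠ 0) :
    (φ ^ k) v ≠ v := by
  obtain ⟨k, rfl⟩ := Nat.exists_eq_succ_of_ne_zero hk
  obtain ⟨W, hW, hWl, -⟩ := hG.exists_isPath_pow_apply φ hP h k
  intro hfix
  have hW0 : W.length = 0 := by
    simpa using Walk.isPath_iff_nil.mp ((Walk.isPath_copy _ _ _).mpr hW : (W.copy rfl hfix).IsPath)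
  have hP0 : P.length ≠ 0 :=
    mt Walk.length_eq_zero_iff.mp (Walk.not_nil_of_apply_snd_ne_penultimate h)
  simp [hW0, hP0] at hWl

theorem IsTree.exists_adj_apply_apply_eq_of_isOfFinOrder (hG : G.IsTree) (φ : G ≃g G)
    (hφ : IsOfFinOrder φ) (hfix : ∀ v, φ v ≠ v) : ∃ u, G.Adj u (φ u) ∧ φ (φ u) = u := by
  have : Nonempty V := hG.connected.nonempty
  obtain ⟨v, hmin⟩ : ∃ v, ∀ w, G.dist v (φ v) ≤ G.dist w (φ w) :=
    ⟨_, fun w ↦ Function.argmin_le (fun w ↦ G.dist w (φ w)) w⟩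
  obtain ⟨P, hP, hPl⟩ := hG.connected.exists_path_of_dist v (φ v)
  by_cases h : φ P.snd = P.penultimate
  · obtain hn | hn := eq_or_ne P.length 1
    · rw [Walk.snd, P.getVert_of_length_le hn.le, Walk.penultimate, hn, P.getVert_zero] at h
      exact ⟨v, Walk.adj_of_length_eq_one hn, h⟩
    · have hpos : 0 < G.dist v (φ v) := hG.connected.pos_dist_of_ne (hfix v).symm
      have hsnd := hmin P.snd
      rw [h] at hsnd
      have := P.dist_snd_penultimate_le hn
      omega
  · obtain ⟨m, hm, hφm⟩ := hφ.exists_pow_eq_one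
    exact absurd (by rw [hφm]; rfl) (hG.isAcyclic.pow_apply_ne_self φ hP h hm.ne')

end SimpleGraph

theorem stmt_11 {V : Type*} (G : SimpleGraph V) (hT : G.IsTree)
    (f : Equiv.Perm V) (hf : ∀ u v, G.Adj u v ↔ G.Adj (f u) (f v))
    (hord : IsOfFinOrder f) (hnofix : ∀ v, f v ≠ v) :
    ∃ u v, G.Adj u v ∧ f u = v ∧ f v = u := by
  let φ : G ≃g G := ⟨f, (hf _ _).symm⟩
  have hφ : IsOfFinOrder φ := SimpleGraph.Iso.toPermHom_injective.isOfFinOrder_iff.mp hord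
  obtain ⟨u, hadj, hu⟩ := hT.exists_adj_apply_apply_eq_of_isOfFinOrder φ hφ hnofix
  exact ⟨u, f u, hadj, rfl, hu⟩
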